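/- arXiv:2312.05679 — 3 statements merged into one kernel-verified Lean document; each statement's English description precedes it below -/
import Mathlib

section
/- Consider a Markov law Q on paths in V^{t+1} with Q(x_0,...,x_t) = μ_0(x_0)·∏_{τ=1}^t Π_τ(x_{τ-1},x_τ), where each Π_τ fixes every state in a subset V_abs ⊆ V (i.e., Π_τ(j,j) = 1 for j ∈ V_abs). Let P(x_0,...,x_t) = μ̂_0(x_0)·∏_{τ=1}^t Π*_τ(x_{τ-1},x_τ), where Π*_τ(x,y) = D_{τ-1}(x)·Π_τ(x,y)·Λ_τ(y) on transitions from transient x into y ∈ V_abs and Π*_τ(x,z) = D_{τ-1}(x)·Π_τ(x,z)·D_τ(z)^{-1} on transitions between transient states, for positive scalars D_τ(x), Λ_τ(y). Then for any path (x_0,...,x_τ) with x_0,...,x_{τ-1} ∉ V_abs and x_τ = j ∈ V_abs, the conditional probabilities of the intermediate segment given the endpoints agree: P(x_1,...,x_{τ-1} | x_0, X first hits j at time τ) = Q(x_1,...,x_{τ-1} | x_0, X first hits j at time τ), provided both conditioning events have positive probability. -/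
lemma prod_split' {t r : ℕ} (hr : r < t) (f : Fin t → ℝ) :
    ∏ s : Fin t, (if (s : ℕ) < r + 1 then f s else 1)
      = (∏ s : Fin t, (if (s : ℕ) < r then f s else 1)) * f ⟨r, hr⟩ := by
  have h1 := Finset.mul_prod_erase Finset.univ
      (fun s : Fin t => if (s : ℕ) < r + 1 then f s else 1) (Finset.mem_univ ⟨r, hr⟩)
  have h2 := Finset.mul_prod_erase Finset.univ
      (fun s : Fin t => if (s : ℕ) < r then f s else 1) (Finset.mem_univ ⟨r, hr⟩)
  have h3 : ∏ s ∈ Finset.univ.erase (⟨r, hr⟩ : Fin t), (if (s : ℕ) < r + 1 then f s else 1)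
      = ∏ s ∈ Finset.univ.erase (⟨r, hr⟩ : Fin t), (if (s : ℕ) < r then f s else 1) := by
    refine Finset.prod_congr rfl fun s hs => ?_
    have hne : (s : ℕ) ≠ r := fun h => (Finset.mem_erase.mp hs).1 (Fin.ext h)
    by_cases h : (s : ℕ) < r
    · rw [if_pos h, if_pos (by omega)]
    · rw [if_neg h, if_neg (by omega)]
  rw [← h1, ← h2, h3]
  simp only [if_pos (by omega : r < r + 1), if_neg (by omega : ¬ r < r)]
  ring

lemma marg_step {V : Type*} [Fintype V] [DecidableEq V] {n : ℕ}
    (k : Fin n) (F : (Fin n → V) → ℝ) (L : (Fin n → V) → V → ℝ)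
    (hF : ∀ ω v, F (Function.update ω k v) = F ω)
    (hL : ∀ ω v w, L (Function.update ω k v) w = L ω w)
    (hL1 : ∀ ω, ∑ v, L ω v = 1) :
    (∑ ω : Fin n → V, F ω * L ω (ω k)) * (Fintype.card V : ℝ)
      = ∑ ω : Fin n → V, F ω := by
  have φinv : Function.Involutive
      (fun p : (Fin n → V) × V => (Function.update p.1 k p.2, p.1 k)) := by
    intro p
    simp [Function.update_idem, Function.update_self, Function.update_eq_self]
  calc (∑ ω : Fin n → V, F ω * L ω (ω k)) * (Fintype.card V : ℝ)
      = ∑ p : (Fin n → V) × V, F p.1 * L p.1 (p.1 k) := by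
        rw [Fintype.sum_prod_type]
        simp only [Finset.sum_const, Finset.card_univ, nsmul_eq_mul]
        rw [← Finset.mul_sum, mul_comm]
    _ = ∑ p : (Fin n → V) × V, F p.1 * L p.1 p.2 := by
        rw [← Equiv.sum_comp φinv.toPerm (fun p : (Fin n → V) × V => F p.1 * L p.1 p.2)]
        refine Finset.sum_congr rfl fun p _ => ?_
        simp [Function.Involutive.coe_toPerm, hF, hL, Function.update_self]
    _ = ∑ ω : Fin n → V, F ω := by
        rw [Fintype.sum_prod_type]
        simp [← Finset.mul_sum, hL1]

lemma trunc {V : Type*} [Fintype V] [DecidableEq V] {t : ℕ}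
    (L : Fin t → V → V → ℝ) (hL : ∀ s x, ∑ y, L s x y = 1) (μ : V → ℝ) :
    ∀ (d τ : ℕ), τ + d = t →
    ∀ (A : (Fin (t + 1) → V) → Prop) (hdec : DecidablePred A),
    (∀ ω ω' : Fin (t + 1) → V, (∀ s : Fin (t + 1), (s : ℕ) ≤ τ → ω s = ω' s) → (A ω ↔ A ω')) →
    (∑ ω : Fin (t + 1) → V,
        if A ω then μ (ω 0) * ∏ s : Fin t, L s (ω s.castSucc) (ω s.succ) else 0)
      * (Fintype.card V : ℝ) ^ d
    = ∑ ω : Fin (t + 1) → V,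
        if A ω then μ (ω 0) * ∏ s : Fin t,
          (if (s : ℕ) < τ then L s (ω s.castSucc) (ω s.succ) else 1) else 0 := by
  intro d
  induction d with
  | zero =>
    intro τ hτ A hdec hA
    rw [pow_zero, mul_one]
    refine Finset.sum_congr rfl fun ω _ => ?_
    by_cases h : A ω
    · rw [if_pos h, if_pos h]
      congr 1
      exact (Finset.prod_congr rfl fun s _ => (if_pos (by omega)).symm)
    · rw [if_neg h, if_neg h]
  | succ d ih =>
    intro τ hτ A hdec hA
    have hτt : τ < t := by omega
    have hA' : ∀ ω ω' : Fin (t + 1) → V,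
        (∀ s : Fin (t + 1), (s : ℕ) ≤ τ + 1 → ω s = ω' s) → (A ω ↔ A ω') :=
      fun ω ω' h => hA ω ω' (fun s hs => h s (by omega))
    rw [pow_succ, ← mul_assoc, ih (τ + 1) (by omega) A hdec hA']
    -- now apply marg_step
    set k : Fin (t + 1) := ⟨τ + 1, by omega⟩ with hk
    set F : (Fin (t + 1) → V) → ℝ := fun ω =>
      if A ω then μ (ω 0) * ∏ s : Fin t,
        (if (s : ℕ) < τ then L s (ω s.castSucc) (ω s.succ) else 1) else 0 with hFdef
    set L' : (Fin (t + 1) → V) → V → ℝ := fun ω v =>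
      L ⟨τ, hτt⟩ (ω ⟨τ, by omega⟩) v with hLdef
    have hupd : ∀ (ω : Fin (t + 1) → V) (v : V) (i : Fin (t + 1)), (i : ℕ) ≤ τ →
        Function.update ω k v i = ω i := by
      intro ω v i hi
      have hik : i ≠ k := by
        rw [hk]; intro h; have := congrArg Fin.val h; simp at this; omega
      exact Function.update_of_ne hik v ω
    have hF : ∀ ω v, F (Function.update ω k v) = F ω := by
      intro ω v
      have hAiff : A (Function.update ω k v) ↔ A ω :=
        hA _ _ (fun s hs => hupd ω v s hs)
      simp only [hFdef]
      by_cases h : A ω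
      · rw [if_pos (hAiff.mpr h), if_pos h, hupd ω v 0 (by simp)]
        congr 1
        refine Finset.prod_congr rfl fun s _ => ?_
        by_cases hs : (s : ℕ) < τ
        · rw [if_pos hs, if_pos hs,
            hupd ω v s.castSucc (by simp [Fin.coe_castSucc]; omega),
            hupd ω v s.succ (by simp [Fin.val_succ]; omega)]
        · rw [if_neg hs, if_neg hs]
      · rw [if_neg (fun hh => h (hAiff.mp hh)), if_neg h]
    have hLu : ∀ ω v w, L' (Function.update ω k v) w = L' ω w := by
      intro ω v w
      simp only [hLdef]
      rw [hupd ω v ⟨τ, by omega⟩ (by simp)]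
    have key := marg_step k F L' hF hLu (fun ω => hL _ _)
    rw [← key]
    congr 1
    refine Finset.sum_congr rfl fun ω _ => ?_
    simp only [hFdef, hLdef]
    by_cases h : A ω
    · rw [if_pos h, ite_mul, if_pos h,
        prod_split' hτt (fun s => L s (ω s.castSucc) (ω s.succ))]
      have hfac : L (⟨τ, hτt⟩ : Fin t) (ω (Fin.castSucc ⟨τ, hτt⟩)) (ω (Fin.succ ⟨τ, hτt⟩))
          = L (⟨τ, hτt⟩ : Fin t) (ω ⟨τ, by omega⟩) (ω k) := by
        simp [Fin.castSucc_mk, Fin.succ_mk, hk]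
      rw [hfac]; ring
    · rw [if_neg h, ite_mul, if_neg h, zero_mul]

lemma telescope' {V : Type*} [Fintype V] [DecidableEq V] {t : ℕ} (Vabs : Finset V)
    (K Ks : Fin t → V → V → ℝ)
    (D : Fin (t + 1) → V → ℝ) (Λ : Fin t → V → ℝ)
    (hD : ∀ τ x, 0 < D τ x)
    (hscaleB : ∀ τ : Fin t, ∀ x ∉ Vabs, ∀ y ∈ Vabs,
      Ks τ x y = D τ.castSucc x * K τ x y * Λ τ y)
    (hscaleA : ∀ τ : Fin t, ∀ x ∉ Vabs, ∀ z ∉ Vabs,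
      Ks τ x z = D τ.castSucc x * K τ x z / D τ.succ z)
    (τ : ℕ) (hτ1 : 1 ≤ τ) (hτt : τ ≤ t)
    (j : V) (hj : j ∈ Vabs)
    (ω : Fin (t + 1) → V)
    (hω : ∀ s : Fin (t + 1), (s : ℕ) < τ → ω s ∉ Vabs)
    (hωj : ω ⟨τ, Nat.lt_succ_of_le hτt⟩ = j) :
    ∏ s : Fin t, (if (s : ℕ) < τ then Ks s (ω s.castSucc) (ω s.succ) else 1)
      = D 0 (ω 0) * Λ ⟨τ - 1, by omega⟩ j *
        ∏ s : Fin t, (if (s : ℕ) < τ then K s (ω s.castSucc) (ω s.succ) else 1) := by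
  have main : ∀ r : ℕ, (hrτ : r < τ) →
      (∏ s : Fin t, (if (s : ℕ) < r then Ks s (ω s.castSucc) (ω s.succ) else 1))
        * D ⟨r, by omega⟩ (ω ⟨r, by omega⟩)
      = D 0 (ω 0) *
        ∏ s : Fin t, (if (s : ℕ) < r then K s (ω s.castSucc) (ω s.succ) else 1) := by
    intro r
    induction r with
    | zero =>
      intro _
      have h0 : ((⟨0, by omega⟩ : Fin (t + 1))) = 0 := rfl
      simp [h0]
    | succ r ih =>
      intro hr
      have hrt : r < t := by omega
      have hx1 : ω ⟨r, by omega⟩ ∉ Vabs := hω ⟨r, by omega⟩ (by simp; omega)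
      have hx2 : ω ⟨r + 1, by omega⟩ ∉ Vabs := hω ⟨r + 1, by omega⟩ (by simp; omega)
      have hcs : (Fin.castSucc ⟨r, hrt⟩ : Fin (t + 1)) = ⟨r, by omega⟩ := by
        simp [Fin.castSucc_mk]
      have hsc : (Fin.succ ⟨r, hrt⟩ : Fin (t + 1)) = ⟨r + 1, by omega⟩ := by
        simp [Fin.succ_mk]
      have hKs := hscaleA ⟨r, hrt⟩ (ω (Fin.castSucc ⟨r, hrt⟩)) (by rw [hcs]; exact hx1)
        (ω (Fin.succ ⟨r, hrt⟩)) (by rw [hsc]; exact hx2)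
      rw [prod_split' hrt (fun s => Ks s (ω s.castSucc) (ω s.succ)),
          prod_split' hrt (fun s => K s (ω s.castSucc) (ω s.succ))]
      have hDr := (hD ⟨r, by omega⟩ (ω ⟨r, by omega⟩)).ne'
      have hDr1 := (hD ⟨r + 1, by omega⟩ (ω ⟨r + 1, by omega⟩)).ne'
      have ihr := ih (by omega)
      rw [hKs, hcs, hsc]
      field_simp
      linear_combination K ⟨r, hrt⟩ (ω ⟨r, by omega⟩) (ω ⟨r + 1, by omega⟩) * ihr
  -- final step
  obtain ⟨ρ, hρ⟩ : ∃ ρ, τ = ρ + 1 := ⟨τ - 1, by omega⟩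
  subst hρ
  have hρt : ρ < t := by omega
  have hx1 : ω ⟨ρ, by omega⟩ ∉ Vabs := hω ⟨ρ, by omega⟩ (by simp)
  have hcs : (Fin.castSucc ⟨ρ, hρt⟩ : Fin (t + 1)) = ⟨ρ, by omega⟩ := by
    simp [Fin.castSucc_mk]
  have hsc : (Fin.succ ⟨ρ, hρt⟩ : Fin (t + 1)) = ⟨ρ + 1, by omega⟩ := by
    simp [Fin.succ_mk]
  have hKs := hscaleB ⟨ρ, hρt⟩ (ω (Fin.castSucc ⟨ρ, hρt⟩)) (by rw [hcs]; exact hx1)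
      (ω (Fin.succ ⟨ρ, hρt⟩)) (by rw [hsc, hωj]; exact hj)
  rw [prod_split' hρt (fun s => Ks s (ω s.castSucc) (ω s.succ)),
      prod_split' hρt (fun s => K s (ω s.castSucc) (ω s.succ))]
  have hev : (⟨ρ + 1 - 1, by omega⟩ : Fin t) = ⟨ρ, hρt⟩ := by simp
  rw [hKs, hcs, hsc, hωj, hev]
  have hmain := main ρ (by omega)
  linear_combination (K ⟨ρ, hρt⟩ (ω ⟨ρ, by omega⟩) j * Λ ⟨ρ, hρt⟩ j) * hmain


/-- "Shared bridges": if the posterior kernels are obtained from the prior kernels by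
diagonal scalings (`Π*_τ(x,y) = D_{τ-1}(x) Π_τ(x,y) Λ_τ(y)` into absorbing states and
`Π*_τ(x,z) = D_{τ-1}(x) Π_τ(x,z) / D_τ(z)` between transient states), then, conditioned
on starting at `x 0` and first hitting the absorbing state `j` at time `τ`, the
probability of any intermediate segment is the same under the prior and the posterior. -/
theorem stmt_7 {V : Type*} [Fintype V] [DecidableEq V]
    (t : ℕ) (ht : 1 ≤ t) (Vabs : Finset V)
    (K Ks : Fin t → V → V → ℝ)
    (μ μs : V → ℝ)
    (D : Fin (t + 1) → V → ℝ) (Λ : Fin t → V → ℝ)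
    (hK0 : ∀ τ x y, 0 ≤ K τ x y) (hKrow : ∀ τ x, ∑ y, K τ x y = 1)
    (hKabs : ∀ τ, ∀ j ∈ Vabs, K τ j j = 1)
    (hKs0 : ∀ τ x y, 0 ≤ Ks τ x y) (hKsrow : ∀ τ x, ∑ y, Ks τ x y = 1)
    (hKsabs : ∀ τ, ∀ j ∈ Vabs, Ks τ j j = 1)
    (hD : ∀ τ x, 0 < D τ x) (hΛ : ∀ τ y, 0 < Λ τ y)
    (hscaleB : ∀ τ : Fin t, ∀ x ∉ Vabs, ∀ y ∈ Vabs,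
      Ks τ x y = D τ.castSucc x * K τ x y * Λ τ y)
    (hscaleA : ∀ τ : Fin t, ∀ x ∉ Vabs, ∀ z ∉ Vabs,
      Ks τ x z = D τ.castSucc x * K τ x z / D τ.succ z)
    (hμ0 : ∀ x, 0 ≤ μ x) (hμ1 : ∑ x, μ x = 1)
    (hμs0 : ∀ x, 0 ≤ μs x) (hμs1 : ∑ x, μs x = 1)
    -- the two laws on paths
    (Q P : (Fin (t + 1) → V) → ℝ)
    (hQ : ∀ ω, Q ω = μ (ω 0) * ∏ s : Fin t, K s (ω s.castSucc) (ω s.succ))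
    (hP : ∀ ω, P ω = μs (ω 0) * ∏ s : Fin t, Ks s (ω s.castSucc) (ω s.succ))
    -- a path that stays transient up to time τ-1 and hits j ∈ Vabs at time τ
    (τ : ℕ) (hτ1 : 1 ≤ τ) (hτt : τ ≤ t)
    (x : Fin (t + 1) → V) (j : V) (hj : j ∈ Vabs)
    (hxtrs : ∀ s : Fin (t + 1), (s : ℕ) < τ → x s ∉ Vabs)
    (hxj : x ⟨τ, by omega⟩ = j)
    -- positivity of the conditioning events
    (hQpos : 0 < ∑ ω : Fin (t + 1) → V,
      if ω 0 = x 0 ∧ (∀ s : Fin (t + 1), (s : ℕ) < τ → ω s ∉ Vabs) ∧ ω ⟨τ, by omega⟩ = j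
      then Q ω else 0)
    (hPpos : 0 < ∑ ω : Fin (t + 1) → V,
      if ω 0 = x 0 ∧ (∀ s : Fin (t + 1), (s : ℕ) < τ → ω s ∉ Vabs) ∧ ω ⟨τ, by omega⟩ = j
      then P ω else 0) :
    (∑ ω : Fin (t + 1) → V,
        if (∀ s : Fin (t + 1), (s : ℕ) ≤ τ → ω s = x s) then P ω else 0) /
      (∑ ω : Fin (t + 1) → V,
        if ω 0 = x 0 ∧ (∀ s : Fin (t + 1), (s : ℕ) < τ → ω s ∉ Vabs) ∧ ω ⟨τ, by omega⟩ = j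
        then P ω else 0) =
    (∑ ω : Fin (t + 1) → V,
        if (∀ s : Fin (t + 1), (s : ℕ) ≤ τ → ω s = x s) then Q ω else 0) /
      (∑ ω : Fin (t + 1) → V,
        if ω 0 = x 0 ∧ (∀ s : Fin (t + 1), (s : ℕ) < τ → ω s ∉ Vabs) ∧ ω ⟨τ, by omega⟩ = j
        then Q ω else 0) := by
  have hτt1 : τ < t + 1 := by omega
  have hτ1t : τ - 1 < t := by omega
  have hVne : Nonempty V := by
    by_contra h
    rw [not_nonempty_iff] at h
    rw [Finset.univ_eq_empty, Finset.sum_empty] at hμ1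
    norm_num at hμ1
  have hcard : (0 : ℝ) < (Fintype.card V : ℝ) := by exact_mod_cast Fintype.card_pos
  have hc : (0 : ℝ) < (Fintype.card V : ℝ) ^ (t - τ) := pow_pos hcard _
  set c : ℝ := (Fintype.card V : ℝ) ^ (t - τ) with hcdef
  -- invariance of the two events under changes of coordinates > τ
  have hBA : ∀ ω ω' : Fin (t + 1) → V, (∀ s : Fin (t + 1), (s : ℕ) ≤ τ → ω s = ω' s) →
      ((∀ s : Fin (t + 1), (s : ℕ) ≤ τ → ω s = x s) ↔
        (∀ s : Fin (t + 1), (s : ℕ) ≤ τ → ω' s = x s)) := by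
    intro ω ω' h
    constructor <;> intro hh s hs
    · rw [← h s hs]; exact hh s hs
    · rw [h s hs]; exact hh s hs
  have hEA : ∀ ω ω' : Fin (t + 1) → V, (∀ s : Fin (t + 1), (s : ℕ) ≤ τ → ω s = ω' s) →
      ((ω 0 = x 0 ∧ (∀ s : Fin (t + 1), (s : ℕ) < τ → ω s ∉ Vabs) ∧ ω ⟨τ, hτt1⟩ = j) ↔
       (ω' 0 = x 0 ∧ (∀ s : Fin (t + 1), (s : ℕ) < τ → ω' s ∉ Vabs) ∧ ω' ⟨τ, hτt1⟩ = j)) := by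
    intro ω ω' h
    have h0 : ω 0 = ω' 0 := h 0 (by simp)
    have hτval : ω ⟨τ, hτt1⟩ = ω' ⟨τ, hτt1⟩ := h _ (le_refl τ)
    constructor <;> rintro ⟨ha, hb, hcc⟩ <;> refine ⟨?_, fun s hs => ?_, ?_⟩
    · rw [← h0]; exact ha
    · rw [← h s (le_of_lt hs)]; exact hb s hs
    · rw [← hτval]; exact hcc
    · rw [h0]; exact ha
    · rw [h s (le_of_lt hs)]; exact hb s hs
    · rw [hτval]; exact hcc
  -- the four truncation identities
  have eqQB : (∑ ω : Fin (t + 1) → V,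
      if (∀ s : Fin (t + 1), (s : ℕ) ≤ τ → ω s = x s)
      then μ (ω 0) * ∏ s : Fin t, K s (ω s.castSucc) (ω s.succ) else 0) * c
      = ∑ ω : Fin (t + 1) → V,
      if (∀ s : Fin (t + 1), (s : ℕ) ≤ τ → ω s = x s)
      then μ (ω 0) * ∏ s : Fin t, (if (s : ℕ) < τ then K s (ω s.castSucc) (ω s.succ) else 1)
      else 0 :=
    trunc K hKrow μ (t - τ) τ (by omega) _ _ hBA
  have eqPB : (∑ ω : Fin (t + 1) → V,
      if (∀ s : Fin (t + 1), (s : ℕ) ≤ τ → ω s = x s)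
      then μs (ω 0) * ∏ s : Fin t, Ks s (ω s.castSucc) (ω s.succ) else 0) * c
      = ∑ ω : Fin (t + 1) → V,
      if (∀ s : Fin (t + 1), (s : ℕ) ≤ τ → ω s = x s)
      then μs (ω 0) * ∏ s : Fin t, (if (s : ℕ) < τ then Ks s (ω s.castSucc) (ω s.succ) else 1)
      else 0 :=
    trunc Ks hKsrow μs (t - τ) τ (by omega) _ _ hBA
  have eqQE : (∑ ω : Fin (t + 1) → V,
      if ω 0 = x 0 ∧ (∀ s : Fin (t + 1), (s : ℕ) < τ → ω s ∉ Vabs) ∧ ω ⟨τ, hτt1⟩ = j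
      then μ (ω 0) * ∏ s : Fin t, K s (ω s.castSucc) (ω s.succ) else 0) * c
      = ∑ ω : Fin (t + 1) → V,
      if ω 0 = x 0 ∧ (∀ s : Fin (t + 1), (s : ℕ) < τ → ω s ∉ Vabs) ∧ ω ⟨τ, hτt1⟩ = j
      then μ (ω 0) * ∏ s : Fin t, (if (s : ℕ) < τ then K s (ω s.castSucc) (ω s.succ) else 1)
      else 0 :=
    trunc K hKrow μ (t - τ) τ (by omega) _ _ hEA
  have eqPE : (∑ ω : Fin (t + 1) → V,
      if ω 0 = x 0 ∧ (∀ s : Fin (t + 1), (s : ℕ) < τ → ω s ∉ Vabs) ∧ ω ⟨τ, hτt1⟩ = j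
      then μs (ω 0) * ∏ s : Fin t, Ks s (ω s.castSucc) (ω s.succ) else 0) * c
      = ∑ ω : Fin (t + 1) → V,
      if ω 0 = x 0 ∧ (∀ s : Fin (t + 1), (s : ℕ) < τ → ω s ∉ Vabs) ∧ ω ⟨τ, hτt1⟩ = j
      then μs (ω 0) * ∏ s : Fin t, (if (s : ℕ) < τ then Ks s (ω s.castSucc) (ω s.succ) else 1)
      else 0 :=
    trunc Ks hKsrow μs (t - τ) τ (by omega) _ _ hEA
  -- constant extraction from the truncated sums
  have hPBc : (∑ ω : Fin (t + 1) → V,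
      if (∀ s : Fin (t + 1), (s : ℕ) ≤ τ → ω s = x s)
      then μs (ω 0) * ∏ s : Fin t, (if (s : ℕ) < τ then Ks s (ω s.castSucc) (ω s.succ) else 1)
      else 0)
      = (μs (x 0) * (D 0 (x 0) * Λ ⟨τ - 1, hτ1t⟩ j)) *
        ∑ ω : Fin (t + 1) → V,
      if (∀ s : Fin (t + 1), (s : ℕ) ≤ τ → ω s = x s)
      then ∏ s : Fin t, (if (s : ℕ) < τ then K s (ω s.castSucc) (ω s.succ) else 1) else 0 := by
    rw [Finset.mul_sum]
    refine Finset.sum_congr rfl fun ω _ => ?_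
    by_cases h : ∀ s : Fin (t + 1), (s : ℕ) ≤ τ → ω s = x s
    · rw [if_pos h, if_pos h]
      have h0 : ω 0 = x 0 := h 0 (by simp)
      have htr : ∀ s : Fin (t + 1), (s : ℕ) < τ → ω s ∉ Vabs := by
        intro s hs; rw [h s (le_of_lt hs)]; exact hxtrs s hs
      have hjj : ω ⟨τ, hτt1⟩ = j := by
        rw [h ⟨τ, hτt1⟩ (le_refl τ)]; exact hxj
      rw [telescope' Vabs K Ks D Λ hD hscaleB hscaleA τ hτ1 hτt j hj ω htr hjj, h0]
      ring
    · rw [if_neg h, if_neg h, mul_zero]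
  have hQBc : (∑ ω : Fin (t + 1) → V,
      if (∀ s : Fin (t + 1), (s : ℕ) ≤ τ → ω s = x s)
      then μ (ω 0) * ∏ s : Fin t, (if (s : ℕ) < τ then K s (ω s.castSucc) (ω s.succ) else 1)
      else 0)
      = μ (x 0) *
        ∑ ω : Fin (t + 1) → V,
      if (∀ s : Fin (t + 1), (s : ℕ) ≤ τ → ω s = x s)
      then ∏ s : Fin t, (if (s : ℕ) < τ then K s (ω s.castSucc) (ω s.succ) else 1) else 0 := by
    rw [Finset.mul_sum]
    refine Finset.sum_congr rfl fun ω _ => ?_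
    by_cases h : ∀ s : Fin (t + 1), (s : ℕ) ≤ τ → ω s = x s
    · rw [if_pos h, if_pos h, h 0 (by simp)]
    · rw [if_neg h, if_neg h, mul_zero]
  have hPEc : (∑ ω : Fin (t + 1) → V,
      if ω 0 = x 0 ∧ (∀ s : Fin (t + 1), (s : ℕ) < τ → ω s ∉ Vabs) ∧ ω ⟨τ, hτt1⟩ = j
      then μs (ω 0) * ∏ s : Fin t, (if (s : ℕ) < τ then Ks s (ω s.castSucc) (ω s.succ) else 1)
      else 0)
      = (μs (x 0) * (D 0 (x 0) * Λ ⟨τ - 1, hτ1t⟩ j)) *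
        ∑ ω : Fin (t + 1) → V,
      if ω 0 = x 0 ∧ (∀ s : Fin (t + 1), (s : ℕ) < τ → ω s ∉ Vabs) ∧ ω ⟨τ, hτt1⟩ = j
      then ∏ s : Fin t, (if (s : ℕ) < τ then K s (ω s.castSucc) (ω s.succ) else 1) else 0 := by
    rw [Finset.mul_sum]
    refine Finset.sum_congr rfl fun ω _ => ?_
    by_cases h : ω 0 = x 0 ∧ (∀ s : Fin (t + 1), (s : ℕ) < τ → ω s ∉ Vabs) ∧ ω ⟨τ, hτt1⟩ = j
    · rw [if_pos h, if_pos h,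
        telescope' Vabs K Ks D Λ hD hscaleB hscaleA τ hτ1 hτt j hj ω h.2.1 h.2.2, h.1]
      ring
    · rw [if_neg h, if_neg h, mul_zero]
  have hQEc : (∑ ω : Fin (t + 1) → V,
      if ω 0 = x 0 ∧ (∀ s : Fin (t + 1), (s : ℕ) < τ → ω s ∉ Vabs) ∧ ω ⟨τ, hτt1⟩ = j
      then μ (ω 0) * ∏ s : Fin t, (if (s : ℕ) < τ then K s (ω s.castSucc) (ω s.succ) else 1)
      else 0)
      = μ (x 0) *
        ∑ ω : Fin (t + 1) → V,
      if ω 0 = x 0 ∧ (∀ s : Fin (t + 1), (s : ℕ) < τ → ω s ∉ Vabs) ∧ ω ⟨τ, hτt1⟩ = j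
      then ∏ s : Fin t, (if (s : ℕ) < τ then K s (ω s.castSucc) (ω s.succ) else 1) else 0 := by
    rw [Finset.mul_sum]
    refine Finset.sum_congr rfl fun ω _ => ?_
    by_cases h : ω 0 = x 0 ∧ (∀ s : Fin (t + 1), (s : ℕ) < τ → ω s ∉ Vabs) ∧ ω ⟨τ, hτt1⟩ = j
    · rw [if_pos h, if_pos h, h.1]
    · rw [if_neg h, if_neg h, mul_zero]
  -- rewrite the laws
  simp only [hQ, hP] at hQpos hPpos ⊢
  rw [div_eq_div_iff hPpos.ne' hQpos.ne']
  refine mul_right_cancel₀ (mul_ne_zero hc.ne' hc.ne') ?_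
  have key : ((∑ ω : Fin (t + 1) → V,
      if (∀ s : Fin (t + 1), (s : ℕ) ≤ τ → ω s = x s)
      then μs (ω 0) * ∏ s : Fin t, Ks s (ω s.castSucc) (ω s.succ) else 0) * c) *
      ((∑ ω : Fin (t + 1) → V,
      if ω 0 = x 0 ∧ (∀ s : Fin (t + 1), (s : ℕ) < τ → ω s ∉ Vabs) ∧ ω ⟨τ, hτt1⟩ = j
      then μ (ω 0) * ∏ s : Fin t, K s (ω s.castSucc) (ω s.succ) else 0) * c)
      = ((∑ ω : Fin (t + 1) → V,
      if (∀ s : Fin (t + 1), (s : ℕ) ≤ τ → ω s = x s)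
      then μ (ω 0) * ∏ s : Fin t, K s (ω s.castSucc) (ω s.succ) else 0) * c) *
      ((∑ ω : Fin (t + 1) → V,
      if ω 0 = x 0 ∧ (∀ s : Fin (t + 1), (s : ℕ) < τ → ω s ∉ Vabs) ∧ ω ⟨τ, hτt1⟩ = j
      then μs (ω 0) * ∏ s : Fin t, Ks s (ω s.castSucc) (ω s.succ) else 0) * c) := by
    rw [eqPB, eqQE, eqQB, eqPE, hPBc, hQEc, hQBc, hPEc]
    ring
  linear_combination key
end

section
/- Let B ∈ ℝ^{n×m} and A ∈ ℝ^{n×ℓ} be nonnegative matrices such that [B A] is row-stochastic, and let D ∈ ℝ^{n×n} and Λ ∈ ℝ^{m×m} be diagonal matrices with positive diagonal entries such that [D·B·Λ D·A] is again row-stochastic. Then for any probability row-vector μ̂ on {1,...,n}, the law on {1,...,n}×{1,...,m+ℓ} given by P(x,y) = μ̂(x)·(DBΛ)(x,y) for y ≤ m and μ̂(x)·(DA)(x,y−m) for y > m minimizes Σ_{x,y} μ̂(x)π̂(x,y) log(π̂(x,y)/π(x,y)) over all row-stochastic π̂ = [B̂ Â] satisfying μ̂ᵀB̂ = μ̂ᵀ(DBΛ).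 -/
open Finset

lemma gibbs_pt (q p : ℝ) (hq : 0 ≤ q) (hp : 0 ≤ p) (h : q ≠ 0 → 0 < p) :
    q - p ≤ q * Real.log (q / p) := by
  rcases hq.eq_or_lt with h0 | h0
  · simp [← h0]; linarith
  · have hp' : 0 < p := h h0.ne'
    have hlog : Real.log (p / q) ≤ p / q - 1 :=
      Real.log_le_sub_one_of_pos (div_pos hp' h0)
    have hinv : Real.log (q / p) = - Real.log (p / q) := by
      rw [← Real.log_inv]; congr 1; field_simp
    have h2 : q * (p / q) = p := by field_simp
    nlinarith

/-- Diagonally scaled kernels solve the single-stage partial-marginal Schrödinger problem: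
if `[D·B·Λ  D·A]` is row-stochastic, it minimizes the expected per-row relative entropy
against `π = [B A]` under initial distribution `μ̂` among all row-stochastic `π̂ = [B̂ Â]`
(absolutely continuous w.r.t. `π`) with partial marginal `μ̂ᵀB̂ = μ̂ᵀ(D·B·Λ)`. -/
theorem stmt_8 (n m ℓ : ℕ)
    (B : Matrix (Fin n) (Fin m) ℝ) (A : Matrix (Fin n) (Fin ℓ) ℝ)
    (hB0 : ∀ x y, 0 ≤ B x y) (hA0 : ∀ x z, 0 ≤ A x z)
    (hrow : ∀ x, (∑ y, B x y) + ∑ z, A x z = 1)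
    (D : Fin n → ℝ) (Λ : Fin m → ℝ)
    (hD : ∀ x, 0 < D x) (hΛ : ∀ y, 0 < Λ y)
    (hrowS : ∀ x, (∑ y, D x * B x y * Λ y) + ∑ z, D x * A x z = 1)
    (μ : Fin n → ℝ) (hμ0 : ∀ x, 0 ≤ μ x) (hμ1 : ∑ x, μ x = 1) :
    ∀ (Bh : Matrix (Fin n) (Fin m) ℝ) (Ah : Matrix (Fin n) (Fin ℓ) ℝ),
      (∀ x y, 0 ≤ Bh x y) → (∀ x z, 0 ≤ Ah x z) →
      (∀ x, (∑ y, Bh x y) + ∑ z, Ah x z = 1) →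
      (∀ x y, B x y = 0 → Bh x y = 0) → (∀ x z, A x z = 0 → Ah x z = 0) →
      (∀ y, ∑ x, μ x * Bh x y = ∑ x, μ x * (D x * B x y * Λ y)) →
      (∑ x, μ x * ((∑ y, (D x * B x y * Λ y) *
            Real.log ((D x * B x y * Λ y) / B x y)) +
          ∑ z, (D x * A x z) * Real.log ((D x * A x z) / A x z))) ≤
        ∑ x, μ x * ((∑ y, Bh x y * Real.log (Bh x y / B x y)) +
          ∑ z, Ah x z * Real.log (Ah x z / A x z)) := by
  intro Bh Ah hBh0 hAh0 hrowh hACB hACA hmarg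
  -- value of the optimizer's row entropy
  have opt : ∀ x, (∑ y, (D x * B x y * Λ y) * Real.log ((D x * B x y * Λ y) / B x y)) +
      ∑ z, (D x * A x z) * Real.log ((D x * A x z) / A x z)
      = Real.log (D x) + ∑ y, (D x * B x y * Λ y) * Real.log (Λ y) := by
    intro x
    have hBe : ∀ y, (D x * B x y * Λ y) * Real.log ((D x * B x y * Λ y) / B x y)
        = (D x * B x y * Λ y) * Real.log (D x) + (D x * B x y * Λ y) * Real.log (Λ y) := by
      intro y
      rcases eq_or_ne (B x y) 0 with h0 | h0
      · simp [h0]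
      · have hBpos : 0 < B x y := (hB0 x y).lt_of_ne (Ne.symm h0)
        have : (D x * B x y * Λ y) / B x y = D x * Λ y := by field_simp
        rw [this, Real.log_mul (ne_of_gt (hD x)) (ne_of_gt (hΛ y))]; ring
    have hAe : ∀ z, (D x * A x z) * Real.log ((D x * A x z) / A x z)
        = (D x * A x z) * Real.log (D x) := by
      intro z
      rcases eq_or_ne (A x z) 0 with h0 | h0
      · simp [h0]
      · have : (D x * A x z) / A x z = D x := by field_simp
        rw [this]
    simp only [hBe, hAe, Finset.sum_add_distrib, ← Finset.sum_mul]
    linear_combination Real.log (D x) * hrowS x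
  -- per-row lower bound for the competitor
  have key : ∀ x, Real.log (D x) + ∑ y, Bh x y * Real.log (Λ y) ≤
      (∑ y, Bh x y * Real.log (Bh x y / B x y)) +
        ∑ z, Ah x z * Real.log (Ah x z / A x z) := by
    intro x
    have hdecB : ∀ y, Bh x y * Real.log (Bh x y / B x y) =
        Bh x y * Real.log (Bh x y / (D x * B x y * Λ y)) +
          (Bh x y * Real.log (D x) + Bh x y * Real.log (Λ y)) := by
      intro y
      rcases eq_or_ne (Bh x y) 0 with h0 | h0
      · simp [h0]
      · have hBpos : 0 < B x y :=
          (hB0 x y).lt_of_ne (fun he => h0 (hACB x y he.symm))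
        have hDB : D x * B x y * Λ y ≠ 0 :=
          ne_of_gt (mul_pos (mul_pos (hD x) hBpos) (hΛ y))
        rw [Real.log_div h0 (ne_of_gt hBpos), Real.log_div h0 hDB,
          Real.log_mul (ne_of_gt (mul_pos (hD x) hBpos)) (ne_of_gt (hΛ y)),
          Real.log_mul (ne_of_gt (hD x)) (ne_of_gt hBpos)]
        ring
    have hdecA : ∀ z, Ah x z * Real.log (Ah x z / A x z) =
        Ah x z * Real.log (Ah x z / (D x * A x z)) + Ah x z * Real.log (D x) := by
      intro z
      rcases eq_or_ne (Ah x z) 0 with h0 | h0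
      · simp [h0]
      · have hApos : 0 < A x z :=
          (hA0 x z).lt_of_ne (fun he => h0 (hACA x z he.symm))
        have hDA : D x * A x z ≠ 0 := ne_of_gt (mul_pos (hD x) hApos)
        rw [Real.log_div h0 (ne_of_gt hApos), Real.log_div h0 hDA,
          Real.log_mul (ne_of_gt (hD x)) (ne_of_gt hApos)]
        ring
    -- Gibbs part is nonnegative
    have gibbsB : ∀ y ∈ Finset.univ, Bh x y - D x * B x y * Λ y ≤
        Bh x y * Real.log (Bh x y / (D x * B x y * Λ y)) := by
      intro y _
      refine gibbs_pt _ _ (hBh0 x y)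
        (mul_nonneg (mul_nonneg (hD x).le (hB0 x y)) (hΛ y).le) ?_
      intro h0
      have hBpos : 0 < B x y :=
        (hB0 x y).lt_of_ne (fun he => h0 (hACB x y he.symm))
      exact mul_pos (mul_pos (hD x) hBpos) (hΛ y)
    have gibbsA : ∀ z ∈ Finset.univ, Ah x z - D x * A x z ≤
        Ah x z * Real.log (Ah x z / (D x * A x z)) := by
      intro z _
      refine gibbs_pt _ _ (hAh0 x z) (mul_nonneg (hD x).le (hA0 x z)) ?_
      intro h0
      have hApos : 0 < A x z :=
        (hA0 x z).lt_of_ne (fun he => h0 (hACA x z he.symm))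
      exact mul_pos (hD x) hApos
    have hgB := Finset.sum_le_sum gibbsB
    have hgA := Finset.sum_le_sum gibbsA
    rw [Finset.sum_sub_distrib] at hgB hgA
    have hsum1 := hrowh x
    have hsum2 := hrowS x
    simp only [hdecB, hdecA, Finset.sum_add_distrib]
    have hd : ∑ y, Bh x y * Real.log (D x) + ∑ z, Ah x z * Real.log (D x)
        = Real.log (D x) := by
      rw [← Finset.sum_mul, ← Finset.sum_mul, ← add_mul, hsum1, one_mul]
    linarith
  -- combine
  have hmono : ∑ x, μ x * (Real.log (D x) + ∑ y, Bh x y * Real.log (Λ y)) ≤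
      ∑ x, μ x * ((∑ y, Bh x y * Real.log (Bh x y / B x y)) +
        ∑ z, Ah x z * Real.log (Ah x z / A x z)) :=
    Finset.sum_le_sum (fun x _ => mul_le_mul_of_nonneg_left (key x) (hμ0 x))
  refine le_trans (le_of_eq ?_) hmono
  simp only [opt, mul_add, Finset.sum_add_distrib]
  congr 1
  have swap : ∀ (M : Matrix (Fin n) (Fin m) ℝ),
      ∑ x, μ x * ∑ y, M x y * Real.log (Λ y)
        = ∑ y, (∑ x, μ x * M x y) * Real.log (Λ y) := by
    intro M
    simp_rw [Finset.mul_sum, Finset.sum_mul]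
    rw [Finset.sum_comm]
    apply Finset.sum_congr rfl; intro y _
    apply Finset.sum_congr rfl; intro x _
    ring
  rw [swap (fun x y => D x * B x y * Λ y), swap Bh]
  apply Finset.sum_congr rfl; intro y _
  rw [hmarg y]
end

section
/- Strong converse direction of Sanov-type optimality: let Q be a probability mass function on a finite set Ω with full support and Γ a closed convex set of probability mass functions on Ω containing some P with D(P‖Q) < ∞. Then there is a unique P* ∈ Γ minimizing D(·‖Q), and for every P ∈ Γ, D(P‖Q) ≥ D(P‖P*) + D(P*‖Q) (the Pythagorean inequality for relative entropy). -/
open Real Filter Finset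

private lemma tangent_aux {x y : ℝ} (hx : 0 ≤ x) (hy : 0 < y) :
    x * (Real.log y - Real.log x) ≤ y - x := by
  rcases eq_or_lt_of_le hx with h | h
  · simp [← h, hy.le]
  · have h1 := Real.log_le_sub_one_of_pos (div_pos hy h)
    rw [Real.log_div hy.ne' h.ne'] at h1
    have h2 := mul_le_mul_of_nonneg_left h1 h.le
    have h3 : x * (y / x - 1) = y - x := by field_simp
    nlinarith

private lemma phi_bound {x y c : ℝ} (hx : 0 ≤ x) (hy : 0 < y) :
    (y * Real.log y - y * c) - (x * Real.log x - x * c) ≤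
      (y - x) * (1 + Real.log y - c) := by
  have := tangent_aux hx hy
  nlinarith

private lemma tendsto_log_affine {a b : ℝ} (ha : 0 < a) :
    Filter.Tendsto (fun t : ℝ => Real.log (a + t * b)) (nhds 0) (nhds (Real.log a)) := by
  have h1 : Filter.Tendsto (fun t : ℝ => a + t * b) (nhds 0) (nhds a) := by
    have : ContinuousAt (fun t : ℝ => a + t * b) 0 :=
      continuousAt_const.add (continuousAt_id.mul continuousAt_const)
    simpa using this.tendsto
  exact ((Real.continuousAt_log ha.ne').tendsto).comp h1

/-- For a full-support reference `Q` and a nonempty closed convex set `Γ` of pmfs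
(containing some `P` of finite relative entropy, automatic here), there is a unique
minimizer `P*` of `D(·‖Q)` on `Γ`, and the Pythagorean inequality
`D(P‖Q) ≥ D(P‖P*) + D(P*‖Q)` holds for all `P ∈ Γ`. -/
theorem stmt_18 {Ω : Type*} [Fintype Ω] (Q : Ω → ℝ)
    (hQ : ∀ ω, 0 < Q ω) (hQ1 : ∑ ω, Q ω = 1)
    (Γ : Set (Ω → ℝ)) (hclosed : IsClosed Γ) (hconv : Convex ℝ Γ)
    (hpmf : ∀ P ∈ Γ, (∀ ω, 0 ≤ P ω) ∧ ∑ ω, P ω = 1)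
    (hne : Γ.Nonempty) :
    ∃ Pstar ∈ Γ,
      (∀ P ∈ Γ, ∑ ω, Pstar ω * Real.log (Pstar ω / Q ω) ≤
        ∑ ω, P ω * Real.log (P ω / Q ω)) ∧
      (∀ P' ∈ Γ,
        (∀ P ∈ Γ, ∑ ω, P' ω * Real.log (P' ω / Q ω) ≤
          ∑ ω, P ω * Real.log (P ω / Q ω)) → P' = Pstar) ∧
      (∀ P ∈ Γ,
        (∑ ω, P ω * Real.log (P ω / Pstar ω)) +
            ∑ ω, Pstar ω * Real.log (Pstar ω / Q ω) ≤
          ∑ ω, P ω * Real.log (P ω / Q ω)) := by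
  classical
  set Dc : (Ω → ℝ) → ℝ :=
    fun P => ∑ ω, (P ω * Real.log (P ω) - P ω * Real.log (Q ω)) with hDc
  have hDeq : ∀ P : Ω → ℝ,
      ∑ ω, P ω * Real.log (P ω / Q ω) = Dc P := by
    intro P
    refine Finset.sum_congr rfl fun ω _ => ?_
    rcases eq_or_ne (P ω) 0 with h | h
    · simp [h]
    · rw [Real.log_div h (hQ ω).ne']; ring
  have hcont : Continuous Dc :=
    continuous_finset_sum _ fun ω _ =>
      (Real.continuous_mul_log.comp (continuous_apply ω)).sub
        ((continuous_apply ω).mul continuous_const)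
  have hsub : Γ ⊆ Set.univ.pi (fun _ : Ω => Set.Icc (0:ℝ) 1) := by
    intro P hP ω _
    obtain ⟨h0, h1⟩ := hpmf P hP
    exact ⟨h0 ω, h1 ▸ Finset.single_le_sum (fun i _ => h0 i) (Finset.mem_univ ω)⟩
  have hcpt : IsCompact Γ :=
    (isCompact_univ_pi fun _ => isCompact_Icc).of_isClosed_subset hclosed hsub
  obtain ⟨Pstar, hPsΓ, hmin⟩ := hcpt.exists_isMinOn hne hcont.continuousOn
  obtain ⟨hPs0, hPs1⟩ := hpmf Pstar hPsΓ
  -- key slope bound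
  have key : ∀ P ∈ Γ, (∀ ω, 0 ≤ P ω) → ∀ t : ℝ, t ∈ Set.Ioo (0:ℝ) 1 →
      Dc (fun ω => Pstar ω + t * (P ω - Pstar ω)) - Dc Pstar ≤
        t * ∑ ω ∈ Finset.univ.filter (fun ω => 0 < Pstar ω ∨ 0 < P ω),
          (P ω - Pstar ω) *
            (1 + Real.log (Pstar ω + t * (P ω - Pstar ω)) - Real.log (Q ω)) := by
    intro P hP hP0 t ht
    set T := Finset.univ.filter (fun ω => 0 < Pstar ω ∨ 0 < P ω) with hT
    have hPt_pos : ∀ ω ∈ T, 0 < Pstar ω + t * (P ω - Pstar ω) := by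
      intro ω hω
      have heq : Pstar ω + t * (P ω - Pstar ω) = (1 - t) * Pstar ω + t * P ω := by ring
      rw [heq]
      rcases (Finset.mem_filter.mp hω).2 with h | h
      · nlinarith [mul_pos (by linarith [ht.2] : (0:ℝ) < 1 - t) h,
          mul_nonneg ht.1.le (hP0 ω)]
      · nlinarith [mul_pos ht.1 h,
          mul_nonneg (by linarith [ht.2] : (0:ℝ) ≤ 1 - t) (hPs0 ω)]
    have expand : Dc (fun ω => Pstar ω + t * (P ω - Pstar ω)) - Dc Pstar
        = ∑ ω ∈ T, (((Pstar ω + t * (P ω - Pstar ω)) * Real.log (Pstar ω + t * (P ω - Pstar ω))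
              - (Pstar ω + t * (P ω - Pstar ω)) * Real.log (Q ω))
            - (Pstar ω * Real.log (Pstar ω) - Pstar ω * Real.log (Q ω))) := by
      rw [hDc, ← Finset.sum_sub_distrib]
      refine (Finset.sum_subset (Finset.subset_univ T) fun ω _ hω => ?_).symm
      have h1 : ¬(0 < Pstar ω ∨ 0 < P ω) := by simpa [hT] using hω
      push_neg at h1
      have h2 : Pstar ω = 0 := le_antisymm h1.1 (hPs0 ω)
      have h3 : P ω = 0 := le_antisymm h1.2 (hP0 ω)
      simp [h2, h3]
    rw [expand, Finset.mul_sum]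
    refine Finset.sum_le_sum fun ω hω => ?_
    have hb := phi_bound (x := Pstar ω) (c := Real.log (Q ω)) (hPs0 ω) (hPt_pos ω hω)
    calc _ ≤ ((Pstar ω + t * (P ω - Pstar ω)) - Pstar ω) *
          (1 + Real.log (Pstar ω + t * (P ω - Pstar ω)) - Real.log (Q ω)) := hb
      _ = t * ((P ω - Pstar ω) *
          (1 + Real.log (Pstar ω + t * (P ω - Pstar ω)) - Real.log (Q ω))) := by ring
  -- mixtures stay in Γ
  have hmix : ∀ P ∈ Γ, ∀ t : ℝ, t ∈ Set.Ioo (0:ℝ) 1 →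
      (fun ω => Pstar ω + t * (P ω - Pstar ω)) ∈ Γ := by
    intro P hP t ht
    have := hconv hPsΓ hP (by linarith [ht.2] : (0:ℝ) ≤ 1 - t) ht.1.le (by ring)
    convert this using 1
    funext ω
    simp only [Pi.add_apply, Pi.smul_apply, smul_eq_mul]
    ring
  -- support lemma
  have hsupp : ∀ P ∈ Γ, ∀ ω, Pstar ω = 0 → P ω = 0 := by
    intro P hP ω₀ h0
    by_contra hne0
    obtain ⟨hP0, hP1⟩ := hpmf P hP
    have hpos : 0 < P ω₀ := (hP0 ω₀).lt_of_ne' hne0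
    set T := Finset.univ.filter (fun ω => 0 < Pstar ω ∨ 0 < P ω) with hT
    set F : ℝ → ℝ := fun t => ∑ ω ∈ T, (P ω - Pstar ω) *
        (1 + Real.log (Pstar ω + t * (P ω - Pstar ω)) - Real.log (Q ω)) with hF
    set S := T.filter (fun ω => 0 < Pstar ω) with hS
    set B := T.filter (fun ω => ¬ 0 < Pstar ω) with hB
    have hω₀B : ω₀ ∈ B := by
      simp [hB, hT, hpos, h0]
    have hBfact : ∀ ω ∈ B, Pstar ω = 0 ∧ 0 < P ω := by
      intro ω hω
      rw [hB, Finset.mem_filter] at hω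
      obtain ⟨hωT, hns⟩ := hω
      refine ⟨le_antisymm (not_lt.mp hns) (hPs0 ω), ?_⟩
      rcases (Finset.mem_filter.mp hωT).2 with h | h
      · exact absurd h hns
      · exact h
    have hsplit : ∀ t : ℝ, 0 < t → F t
        = (∑ ω ∈ S, (P ω - Pstar ω) *
            (1 + Real.log (Pstar ω + t * (P ω - Pstar ω)) - Real.log (Q ω)))
          + ((∑ ω ∈ B, P ω * (1 + Real.log (P ω) - Real.log (Q ω)))
              + (∑ ω ∈ B, P ω) * Real.log t) := by
      intro t htpos
      rw [hF]
      simp only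
      rw [← Finset.sum_filter_add_sum_filter_not T (fun ω => 0 < Pstar ω)]
      congr 1
      rw [Finset.sum_mul, ← Finset.sum_add_distrib]
      refine Finset.sum_congr rfl fun ω hω => ?_
      obtain ⟨h2, h3⟩ := hBfact ω hω
      have h4 : Pstar ω + t * (P ω - Pstar ω) = t * P ω := by rw [h2]; ring
      rw [h4, Real.log_mul htpos.ne' h3.ne', h2]
      ring
    -- tendsto atBot
    have hG : Filter.Tendsto (fun t : ℝ => ∑ ω ∈ S, (P ω - Pstar ω) *
        (1 + Real.log (Pstar ω + t * (P ω - Pstar ω)) - Real.log (Q ω))) (nhds 0)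
        (nhds (∑ ω ∈ S, (P ω - Pstar ω) * (1 + Real.log (Pstar ω) - Real.log (Q ω)))) := by
      refine tendsto_finset_sum _ fun ω hω => ?_
      have hps : 0 < Pstar ω := (Finset.mem_filter.mp hω).2
      exact (((tendsto_const_nhds.add (tendsto_log_affine hps)).sub
        tendsto_const_nhds).const_mul _)
    have hm : 0 < ∑ ω ∈ B, P ω :=
      Finset.sum_pos' (fun ω hω => (hBfact ω hω).2.le) ⟨ω₀, hω₀B, hpos⟩
    have hlogB : Filter.Tendsto (fun t : ℝ => (∑ ω ∈ B, P ω) * Real.log t)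
        (nhdsWithin 0 (Set.Ioi 0)) atBot :=
      Real.tendsto_log_nhdsGT_zero.const_mul_atBot hm
    have htend : Filter.Tendsto F (nhdsWithin 0 (Set.Ioi 0)) atBot := by
      have h1 := ((hG.mono_left nhdsWithin_le_nhds).add_const
        (∑ ω ∈ B, P ω * (1 + Real.log (P ω) - Real.log (Q ω)))).add_atBot hlogB
      refine Filter.Tendsto.congr' ?_ h1
      filter_upwards [eventually_mem_nhdsWithin] with t ht
      rw [hsplit t ht]
      ring
    have hev : ∀ᶠ t in nhdsWithin (0:ℝ) (Set.Ioi 0), F t < 0 :=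
      htend.eventually (eventually_lt_atBot 0)
    have hev2 : ∀ᶠ t in nhdsWithin (0:ℝ) (Set.Ioi 0), t < 1 :=
      Filter.Eventually.filter_mono nhdsWithin_le_nhds (gt_mem_nhds one_pos)
    obtain ⟨t, htF, ht1, ht0⟩ :=
      (hev.and (hev2.and eventually_mem_nhdsWithin)).exists
    have htIoo : t ∈ Set.Ioo (0:ℝ) 1 := ⟨ht0, ht1⟩
    have hk := key P hP hP0 t htIoo
    have hmem := hmin (hmix P hP t htIoo)
    have hneg : t * F t < 0 := mul_neg_of_pos_of_neg ht0 htF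
    rw [hF] at hneg
    simp only at hneg
    have : Dc Pstar ≤ Dc (fun ω => Pstar ω + t * (P ω - Pstar ω)) := hmem
    rw [hT] at hneg
    linarith
  -- Pythagorean quantity nonnegative
  have hA : ∀ P ∈ Γ,
      0 ≤ ∑ ω, (P ω - Pstar ω) * (Real.log (Pstar ω) - Real.log (Q ω)) := by
    intro P hP
    obtain ⟨hP0, hP1⟩ := hpmf P hP
    set T := Finset.univ.filter (fun ω => 0 < Pstar ω ∨ 0 < P ω) with hT
    have hoff : ∀ ω, ω ∉ T → Pstar ω = 0 ∧ P ω = 0 := by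
      intro ω hω
      have h1 : ¬(0 < Pstar ω ∨ 0 < P ω) := by simpa [hT] using hω
      push_neg at h1
      exact ⟨le_antisymm h1.1 (hPs0 ω), le_antisymm h1.2 (hP0 ω)⟩
    have hTpos : ∀ ω ∈ T, 0 < Pstar ω := by
      intro ω hω
      rcases (Finset.mem_filter.mp hω).2 with h | h
      · exact h
      · rcases (hPs0 ω).lt_or_eq with h' | h'
        · exact h'
        · exact absurd (hsupp P hP ω h'.symm) h.ne'
    set F : ℝ → ℝ := fun t => ∑ ω ∈ T, (P ω - Pstar ω) *
        (1 + Real.log (Pstar ω + t * (P ω - Pstar ω)) - Real.log (Q ω)) with hF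
    have hG : Filter.Tendsto F (nhds 0)
        (nhds (∑ ω ∈ T, (P ω - Pstar ω) * (1 + Real.log (Pstar ω) - Real.log (Q ω)))) := by
      refine tendsto_finset_sum _ fun ω hω => ?_
      exact (((tendsto_const_nhds.add (tendsto_log_affine (hTpos ω hω))).sub
        tendsto_const_nhds).const_mul _)
    have hFt0 : ∀ᶠ t in nhdsWithin (0:ℝ) (Set.Ioi 0), 0 ≤ F t := by
      have hev2 : ∀ᶠ t in nhdsWithin (0:ℝ) (Set.Ioi 0), t < 1 :=
        Filter.Eventually.filter_mono nhdsWithin_le_nhds (gt_mem_nhds one_pos)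
      filter_upwards [hev2, eventually_mem_nhdsWithin] with t ht1 ht0
      have htIoo : t ∈ Set.Ioo (0:ℝ) 1 := ⟨ht0, ht1⟩
      have hk := key P hP hP0 t htIoo
      have hmem := hmin (hmix P hP t htIoo)
      have h1 : (0:ℝ) ≤ Dc (fun ω => Pstar ω + t * (P ω - Pstar ω)) - Dc Pstar := by
        have : Dc Pstar ≤ Dc (fun ω => Pstar ω + t * (P ω - Pstar ω)) := hmem
        linarith
      have h2 : (0:ℝ) ≤ t * F t := by
        rw [hF]; simp only; rw [hT] at *
        linarith [hk]
      exact (mul_nonneg_iff_of_pos_left (ht0 : (0:ℝ) < t)).mp h2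
    have h0le : 0 ≤ ∑ ω ∈ T, (P ω - Pstar ω) * (1 + Real.log (Pstar ω) - Real.log (Q ω)) :=
      ge_of_tendsto (hG.mono_left nhdsWithin_le_nhds) hFt0
    have hsumT : ∑ ω ∈ T, (P ω - Pstar ω) = 0 := by
      rw [Finset.sum_sub_distrib]
      have e1 : ∑ ω ∈ T, P ω = 1 := by
        rw [← hP1]
        exact Finset.sum_subset (Finset.subset_univ T) fun ω _ hω => (hoff ω hω).2
      have e2 : ∑ ω ∈ T, Pstar ω = 1 := by
        rw [← hPs1]
        exact Finset.sum_subset (Finset.subset_univ T) fun ω _ hω => (hoff ω hω).1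
      rw [e1, e2]; ring
    have hsplit : ∑ ω ∈ T, (P ω - Pstar ω) * (1 + Real.log (Pstar ω) - Real.log (Q ω))
        = ∑ ω, (P ω - Pstar ω) * (Real.log (Pstar ω) - Real.log (Q ω)) := by
      have e3 : ∀ ω ∈ T, (P ω - Pstar ω) * (1 + Real.log (Pstar ω) - Real.log (Q ω))
          = (P ω - Pstar ω) + (P ω - Pstar ω) * (Real.log (Pstar ω) - Real.log (Q ω)) := by
        intro ω _; ring
      rw [Finset.sum_congr rfl e3, Finset.sum_add_distrib, hsumT, zero_add]
      exact Finset.sum_subset (Finset.subset_univ T) fun ω _ hω => by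
        rw [(hoff ω hω).1, (hoff ω hω).2]; ring
    linarith [hsplit ▸ h0le]
  refine ⟨Pstar, hPsΓ, ?_, ?_, ?_⟩
  · intro P hP
    rw [hDeq, hDeq]
    exact hmin hP
  · -- uniqueness via strict convexity
    intro P' hP' hmin'
    obtain ⟨hP'0, hP'1⟩ := hpmf P' hP'
    by_contra hne'
    obtain ⟨ω₀, hω₀⟩ : ∃ ω, P' ω ≠ Pstar ω := by
      by_contra h; push_neg at h; exact hne' (funext h)
    have hM : (fun ω => (1/2 : ℝ) * P' ω + (1/2 : ℝ) * Pstar ω) ∈ Γ := by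
      have := hconv hP' hPsΓ (by norm_num : (0:ℝ) ≤ 1/2) (by norm_num : (0:ℝ) ≤ 1/2)
        (by norm_num)
      convert this using 1
      funext ω
      simp only [Pi.add_apply, Pi.smul_apply, smul_eq_mul]
    have hEq : Dc P' = Dc Pstar := by
      refine le_antisymm ?_ (hmin hP')
      have := hmin' Pstar hPsΓ
      rw [hDeq, hDeq] at this
      exact this
    have hconvx := Real.strictConvexOn_mul_log
    have hlt : Dc (fun ω => (1/2 : ℝ) * P' ω + (1/2 : ℝ) * Pstar ω)
        < (1/2 : ℝ) * Dc P' + (1/2 : ℝ) * Dc Pstar := by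
      rw [hDc]
      simp only
      have hR : (1/2 : ℝ) * (∑ ω, (P' ω * Real.log (P' ω) - P' ω * Real.log (Q ω)))
          + (1/2 : ℝ) * (∑ ω, (Pstar ω * Real.log (Pstar ω) - Pstar ω * Real.log (Q ω)))
          = ∑ ω, ((1/2 : ℝ) * (P' ω * Real.log (P' ω)) + (1/2 : ℝ) * (Pstar ω * Real.log (Pstar ω))
              - ((1/2 : ℝ) * P' ω + (1/2 : ℝ) * Pstar ω) * Real.log (Q ω)) := by
        rw [Finset.mul_sum, Finset.mul_sum, ← Finset.sum_add_distrib]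
        exact Finset.sum_congr rfl fun ω _ => by ring
      rw [hR]
      refine Finset.sum_lt_sum (fun ω _ => ?_) ⟨ω₀, Finset.mem_univ ω₀, ?_⟩
      · have h := hconvx.convexOn.2 (Set.mem_Ici.mpr (hP'0 ω)) (Set.mem_Ici.mpr (hPs0 ω))
          (by norm_num : (0:ℝ) ≤ 1/2) (by norm_num : (0:ℝ) ≤ 1/2) (by norm_num)
        simp only [smul_eq_mul] at h
        linarith
      · have h := hconvx.2 (Set.mem_Ici.mpr (hP'0 ω₀)) (Set.mem_Ici.mpr (hPs0 ω₀)) hω₀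
          (by norm_num : (0:ℝ) < 1/2) (by norm_num : (0:ℝ) < 1/2) (by norm_num)
        simp only [smul_eq_mul] at h
        linarith
    have hmM : Dc Pstar ≤ Dc (fun ω => (1/2 : ℝ) * P' ω + (1/2 : ℝ) * Pstar ω) := hmin hM
    rw [hEq] at hlt
    linarith
  · -- Pythagorean inequality
    intro P hP
    obtain ⟨hP0, hP1⟩ := hpmf P hP
    have hterm : ∀ ω : Ω,
        P ω * Real.log (P ω / Q ω) - P ω * Real.log (P ω / Pstar ω)
          - Pstar ω * Real.log (Pstar ω / Q ω)
        = (P ω - Pstar ω) * (Real.log (Pstar ω) - Real.log (Q ω)) := by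
      intro ω
      rcases eq_or_ne (P ω) 0 with h | h
      · rcases eq_or_ne (Pstar ω) 0 with h' | h'
        · simp [h, h']
        · rw [h, Real.log_div h' (hQ ω).ne']; ring
      · have hs : Pstar ω ≠ 0 := fun h' => h (hsupp P hP ω h')
        rw [Real.log_div h (hQ ω).ne', Real.log_div h hs, Real.log_div hs (hQ ω).ne']
        ring
    have hsum : ∑ ω, P ω * Real.log (P ω / Q ω) - ∑ ω, P ω * Real.log (P ω / Pstar ω)
          - ∑ ω, Pstar ω * Real.log (Pstar ω / Q ω)
        = ∑ ω, (P ω - Pstar ω) * (Real.log (Pstar ω) - Real.log (Q ω)) := by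
      rw [← Finset.sum_sub_distrib, ← Finset.sum_sub_distrib]
      exact Finset.sum_congr rfl fun ω _ => hterm ω
    linarith [hA P hP, hsum]
end
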